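/- For the class of additive valuations over goods, ρ_{2,1} = 4/5: for every additive valuation v over m ≥ 2 items, the nested share NS_{2,1}(v) is at least (4/5)·MMS_2(v), and there exists an additive valuation (item values 3,2,2,2,1) for which NS_{2,1}(v) = 4 while MMS_2(v) = 5. -/

import Mathlib

/-- The maximin share for 2 agents of the additive valuation on `Fin m` with item
values `w` (items indexed in non-increasing value order). -/
noncomputable def MMS2 {m : ℕ} (w : Fin m → ℝ) : ℝ :=
  sSup {x : ℝ | ∃ B : Finset (Fin m), x ≤ ∑ i ∈ B, w i ∧ x ≤ ∑ i ∈ Bᶜ, w i}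

/-- The nested share `NS_{2,1}`: the best value over partitions in which bundle `B₁`
consists of the top item `e₁` together with a suffix of smallest items, and bundle `B₂`
is the consecutive middle block `e₂, …, e_t`. -/
noncomputable def NS21 {m : ℕ} (w : Fin m → ℝ) : ℝ :=
  sSup {x : ℝ | ∃ t : ℕ, 2 ≤ t ∧ t ≤ m ∧
    x ≤ ∑ i ∈ Finset.univ.filter (fun i : Fin m => i.val = 0 ∨ t ≤ i.val), w i ∧
    x ≤ ∑ i ∈ Finset.univ.filter (fun i : Fin m => 1 ≤ i.val ∧ i.val < t), w i}

/-!
Let `μ = MMS₂` and `S` the total value. Then `μ` is at most `S/2`, at most `S - e₁` (one bundle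
misses `e₁`) and at most `S - e₂ - e₃` (one bundle misses two of `e₁, e₂, e₃`). If `e₁ ≥ 4μ/5`, the cut `B₁ = {e₁}` works. Otherwise grow `B₂ = e₂, …, e_t`
until it first reaches `4μ/5`. Stopping at `t = 2` is impossible as `e₂ ≤ e₁`; stopping at `t = 3`
leaves `B₁` worth at least `S - e₂ - e₃ ≥ μ`; for `t ≥ 4` the last item added is at most half of
`e₂ + e₃`, so `B₂ < 6μ/5` and `B₁ > S - 6μ/5 ≥ 4μ/5`.
-/

open Finset

theorem sum_le_sum_univ_sub_of_disjoint {α : Type*} [Fintype α] [DecidableEq α] {w : α → ℝ}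
    (hw : ∀ i, 0 ≤ w i) {D E : Finset α} (h : Disjoint D E) :
    ∑ i ∈ D, w i ≤ ∑ i, w i - ∑ i ∈ E, w i := by
  rw [← sum_compl_add_sum E, add_sub_cancel_right]
  exact sum_le_sum_of_subset_of_nonneg (subset_compl_iff_disjoint_right.mpr h)
    fun i _ _ => hw i

section MMS2

variable {m : ℕ} {w : Fin m → ℝ}

theorem le_MMS2 {x : ℝ} (B : Finset (Fin m)) (h₁ : x ≤ ∑ i ∈ B, w i)
    (h₂ : x ≤ ∑ i ∈ Bᶜ, w i) : x ≤ MMS2 w := by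
  refine le_csSup ⟨(∑ i, w i) / 2, ?_⟩ ⟨B, h₁, h₂⟩
  rintro y ⟨C, hy₁, hy₂⟩
  linarith [sum_add_sum_compl C w]

theorem MMS2_le {X : ℝ} (h : ∀ B : Finset (Fin m), min (∑ i ∈ B, w i) (∑ i ∈ Bᶜ, w i) ≤ X) :
    MMS2 w ≤ X :=
  csSup_le ⟨_, ∅, min_le_left _ _, min_le_right _ _⟩ fun _ ⟨B, h₁, h₂⟩ =>
    (le_min h₁ h₂).trans (h B)

theorem MMS2_le_half_sum : MMS2 w ≤ (∑ i, w i) / 2 :=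
  MMS2_le fun B => by
    linarith [min_le_left (∑ i ∈ B, w i) (∑ i ∈ Bᶜ, w i),
      min_le_right (∑ i ∈ B, w i) (∑ i ∈ Bᶜ, w i), sum_add_sum_compl B w]

theorem MMS2_nonneg (hw : ∀ i, 0 ≤ w i) : 0 ≤ MMS2 w :=
  le_MMS2 ∅ (by simp) (sum_nonneg fun i _ => hw i)

theorem MMS2_le_sum_sub (hw : ∀ i, 0 ≤ w i) (a : Fin m) : MMS2 w ≤ ∑ i, w i - w a := by
  refine MMS2_le fun B => ?_
  have key {D : Finset (Fin m)} (ha : a ∉ D) : ∑ i ∈ D, w i ≤ ∑ i, w i - w a := by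
    simpa using sum_le_sum_univ_sub_of_disjoint hw (disjoint_singleton_right.mpr ha)
  by_cases ha : a ∈ B
  · exact (min_le_right _ _).trans (key (notMem_compl.mpr ha))
  · exact (min_le_left _ _).trans (key ha)

/-- Two of any three items share a bundle, so the other bundle misses both of them. -/
theorem MMS2_le_sum_sub_sub (hw : ∀ i, 0 ≤ w i) {a b c : Fin m} (hab : a ≠ b) (hac : a ≠ c)
    (hbc : b ≠ c) (hba : w b ≤ w a) (hca : w c ≤ w a) :
    MMS2 w ≤ ∑ i, w i - w b - w c := by
  have key {D : Finset (Fin m)} {x y : Fin m} (hxy : x ≠ y) (hx : x ∉ D) (hy : y ∉ D) :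
      ∑ i ∈ D, w i ≤ ∑ i, w i - w x - w y := by
    have := sum_le_sum_univ_sub_of_disjoint hw (E := {x, y}) (D := D) (by simp [hx, hy])
    rwa [sum_pair hxy, ← sub_sub] at this
  refine MMS2_le fun B => ?_
  wlog ha : a ∈ B generalizing B
  · simpa [min_comm] using this Bᶜ (by simpa using ha)
  have ha' : a ∉ Bᶜ := notMem_compl.mpr ha
  by_cases hb : b ∈ B <;> by_cases hc : c ∈ B
  · exact (min_le_right _ _).trans (key hbc (notMem_compl.mpr hb) (notMem_compl.mpr hc))
  · have := key hab ha' (notMem_compl.mpr hb)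
    exact (min_le_right _ _).trans (by linarith)
  · have := key hac ha' (notMem_compl.mpr hc)
    exact (min_le_right _ _).trans (by linarith)
  · exact (min_le_left _ _).trans (key hbc hb hc)

end MMS2

/-- The value of the bundle `B₂ = {e₂, …, e_t}` of `NS21`. -/
def middleSum {m : ℕ} (w : Fin m → ℝ) (t : ℕ) : ℝ :=
  ∑ i ∈ univ.filter (fun i : Fin m => 1 ≤ i.val ∧ i.val < t), w i

section NS21

variable {m : ℕ} {w : Fin m → ℝ}

theorem sum_filter_zero_or_le_eq_sub_middleSum (t : ℕ) :
    ∑ i ∈ univ.filter (fun i : Fin m => i.val = 0 ∨ t ≤ i.val), w i =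
      ∑ i, w i - middleSum w t := by
  rw [eq_sub_iff_add_eq, middleSum,
    ← sum_filter_add_sum_filter_not univ (fun i : Fin m => i.val = 0 ∨ t ≤ i.val)]
  congr 2
  ext i
  simp only [mem_filter, mem_univ, true_and]
  omega

theorem le_NS21 {x : ℝ} {t : ℕ} (ht₂ : 2 ≤ t) (htm : t ≤ m) (h₁ : x ≤ ∑ i, w i - middleSum w t)
    (h₂ : x ≤ middleSum w t) : x ≤ NS21 w := by
  refine le_csSup ⟨(∑ i, w i) / 2, ?_⟩
    ⟨t, ht₂, htm, by rwa [sum_filter_zero_or_le_eq_sub_middleSum], h₂⟩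
  rintro y ⟨s, -, -, hy₁, hy₂⟩
  rw [sum_filter_zero_or_le_eq_sub_middleSum] at hy₁
  change y ≤ middleSum w s at hy₂
  linarith

theorem NS21_le {X : ℝ} (hm : 2 ≤ m)
    (h : ∀ t, 2 ≤ t → t ≤ m → min (∑ i, w i - middleSum w t) (middleSum w t) ≤ X) :
    NS21 w ≤ X := by
  refine csSup_le ⟨_, 2, le_rfl, hm, min_le_left _ _, min_le_right _ _⟩ ?_
  rintro y ⟨t, ht₂, htm, hy₁, hy₂⟩
  rw [sum_filter_zero_or_le_eq_sub_middleSum] at hy₁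
  exact (le_min hy₁ hy₂).trans (h t ht₂ htm)

theorem middleSum_two (hm : 2 ≤ m) : middleSum w 2 = w ⟨1, hm⟩ := by
  rw [middleSum, ← sum_singleton w ⟨1, hm⟩]
  congr 1
  ext i
  simp [Fin.ext_iff]
  omega

theorem middleSum_succ {t : ℕ} (ht : 1 ≤ t) (htm : t < m) :
    middleSum w (t + 1) = middleSum w t + w ⟨t, htm⟩ := by
  rw [middleSum, middleSum, add_comm (∑ _ ∈ _, _), ← sum_insert (s := univ.filter _) (by simp)]
  congr 1
  ext i
  simp [Fin.ext_iff]
  omega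

theorem middleSum_self (hm : 0 < m) : middleSum w m = ∑ i, w i - w ⟨0, hm⟩ := by
  rw [middleSum, ← sum_erase_eq_sub (mem_univ _)]
  congr 1
  ext i
  simp [Fin.ext_iff]
  omega

theorem add_le_middleSum (hw : ∀ i, 0 ≤ w i) {t : ℕ} (ht : 3 ≤ t) (htm : t ≤ m) :
    w ⟨1, by omega⟩ + w ⟨2, by omega⟩ ≤ middleSum w t := by
  rw [← sum_pair (f := w) (by simp [Fin.ext_iff])]
  refine sum_le_sum_of_subset_of_nonneg ?_ fun i _ _ => hw i
  intro i
  simp [Fin.ext_iff]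
  omega

/-- The new item is no heavier than either of the two items `e₂, e₃` already in the block. -/
theorem middleSum_succ_le (hw : ∀ i, 0 ≤ w i) (hanti : Antitone w) {t : ℕ} (ht : 3 ≤ t)
    (htm : t < m) : middleSum w (t + 1) ≤ 3 / 2 * middleSum w t := by
  have h₁ : w ⟨t, htm⟩ ≤ w ⟨1, by omega⟩ := hanti (Fin.mk_le_mk.mpr (by omega))
  have h₂ : w ⟨t, htm⟩ ≤ w ⟨2, by omega⟩ := hanti (Fin.mk_le_mk.mpr (by omega))
  have := add_le_middleSum hw ht htm.le
  rw [middleSum_succ (by omega) htm]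
  linarith

theorem exists_cut_le_middleSum (hm : 2 ≤ m) (hw : ∀ i, 0 ≤ w i)
    (hanti : Antitone w) {c : ℝ} (h₀ : c ≤ ∑ i, w i - w ⟨0, by omega⟩) (hS : 5 * c ≤ 2 * ∑ i, w i)
    (h₁₂ : ∀ h : 2 < m, c ≤ ∑ i, w i - w ⟨1, by omega⟩ - w ⟨2, h⟩) :
    ∃ t, 2 ≤ t ∧ t ≤ m ∧ c ≤ ∑ i, w i - middleSum w t ∧ c ≤ middleSum w t := by
  by_cases hc₀ : c ≤ w ⟨0, by omega⟩
  · refine ⟨m, hm, le_rfl, ?_, ?_⟩ <;> rw [middleSum_self (by omega)] <;> linarith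
  rw [not_le] at hc₀
  classical
  have hex : ∃ t, 2 ≤ t ∧ t ≤ m ∧ c ≤ middleSum w t :=
    ⟨m, hm, le_rfl, by rwa [middleSum_self (by omega)]⟩
  obtain ⟨t, ⟨ht₂, htm, hct⟩, hmin⟩ : ∃ t, (2 ≤ t ∧ t ≤ m ∧ c ≤ middleSum w t) ∧
      ∀ s < t, ¬(2 ≤ s ∧ s ≤ m ∧ c ≤ middleSum w s) :=
    ⟨Nat.find hex, Nat.find_spec hex, fun _ => Nat.find_min hex⟩
  refine ⟨t, ht₂, htm, ?_, hct⟩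
  have hw₁ : w ⟨1, by omega⟩ ≤ w ⟨0, by omega⟩ := hanti (Fin.mk_le_mk.mpr zero_le_one)
  obtain ⟨s, rfl⟩ : ∃ s, t = s + 1 := ⟨t - 1, by omega⟩
  obtain rfl | hs := (show s = 2 ∨ 3 ≤ s by
    rcases Nat.lt_or_ge s 2 with h | h
    · rw [show s = 1 by omega, middleSum_two hm] at hct
      linarith
    · omega)
  · rw [middleSum_succ (by omega) (by omega), middleSum_two hm]
    linarith [h₁₂ (by omega)]
  · have hsc : middleSum w s < c := not_le.mp fun h => hmin s (by omega) ⟨by omega, by omega, h⟩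
    linarith [middleSum_succ_le hw hanti hs (by omega)]

end NS21

/-- `ρ_{2,1} = 4/5`: for every additive valuation over `m ≥ 2` goods (values sorted in
non-increasing order), `NS_{2,1} ≥ (4/5)·MMS_2`; and for item values `3,2,2,2,1`,
`NS_{2,1} = 4` while `MMS_2 = 5`. -/
theorem rho_two_one_eq_four_fifths :
    (∀ (m : ℕ) (w : Fin m → ℝ), 2 ≤ m → (∀ i, 0 ≤ w i) →
      (∀ i j : Fin m, i ≤ j → w j ≤ w i) →
      (4 / 5 : ℝ) * MMS2 w ≤ NS21 w) ∧
    NS21 (![3, 2, 2, 2, 1] : Fin 5 → ℝ) = 4 ∧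
    MMS2 (![3, 2, 2, 2, 1] : Fin 5 → ℝ) = 5 := by
  refine ⟨fun m w hm hw hsort => ?_, ?_, ?_⟩
  · have hanti : Antitone w := fun i j => hsort i j
    have hμ := MMS2_nonneg hw
    have hμ₀ := MMS2_le_sum_sub hw ⟨0, by omega⟩
    have hμS := MMS2_le_half_sum (w := w)
    obtain ⟨t, ht₂, htm, h₁, h₂⟩ := exists_cut_le_middleSum hm hw hanti (c := 4 / 5 * MMS2 w)
      (by linarith) (by linarith) fun h => by
        have := MMS2_le_sum_sub_sub hw (a := ⟨0, by omega⟩) (b := ⟨1, by omega⟩) (c := ⟨2, h⟩)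
          (by simp) (by simp) (by simp) (hanti (by simp)) (hanti (by simp))
        linarith
    exact le_NS21 ht₂ htm h₁ h₂
  · refine le_antisymm (NS21_le (by norm_num) fun t ht₂ ht₅ => ?_) (le_NS21 (t := 3) ?_ ?_ ?_ ?_)
    · interval_cases t <;> simp [middleSum, sum_filter, Fin.sum_univ_five] <;> norm_num
    all_goals simp [middleSum, sum_filter, Fin.sum_univ_five] <;> norm_num
  · refine le_antisymm (MMS2_le_half_sum.trans ?_) (le_MMS2 {0, 1} ?_ ?_)
    · simp [Fin.sum_univ_five]; norm_num
    · simp; norm_num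
    · rw [show ({0, 1}ᶜ : Finset (Fin 5)) = {2, 3, 4} by decide]
      simp; norm_num
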